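/- Let S ⊆ X ⊆ ℝ^n with S and X compact, let ε ∈ (0,1), suppose that the pair (Y,S) has the homotopy extension property for every Y ⊆ ℝ^n with S ⊆ Int Y, and suppose there is a Lipschitz retraction π : S + B̄(0,ε) → S. Then the following are equivalent: (1) there is a Lipschitz retraction of X onto S; (2) there is a continuous retraction of X onto S; (3) there exist δ ∈ (0,ε) and a continuous retraction of X + B̄(0,δ) onto S; (4) there is a continuous map f : X → S whose restriction to S is homotopic to the identity map of S. -/

import Mathlib

open MeasureTheory Metric Set Filter Matrix Module
open scoped ENNReal NNReal Topology Pointwise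

noncomputable section

/-- `ℝ^n` as a Euclidean space. -/
abbrev Euc (n : ℕ) : Type := EuclideanSpace ℝ (Fin n)

/-- A map which is Lipschitz with some (finite) constant. -/
def IsLip {E F : Type*} [PseudoEMetricSpace E] [PseudoEMetricSpace F] (f : E → F) : Prop :=
  ∃ K : ℝ≥0, LipschitzWith K f

/-- `(S, D)` is a test pair: `D = T ∩ B̄(0,1)` for a `d`-dimensional linear subspace `T`,
`S` is compact with finite `ℋ^d` measure, and no Lipschitz map of `ℝ^n` fixing
`B = T ∩ ∂B̄(0,1)` pointwise maps `S` onto `B`. -/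
def IsTestPair (n d : ℕ) (S D : Set (Euc n)) : Prop :=
  ∃ T : Submodule ℝ (Euc n), Module.finrank ℝ T = d ∧
    D = (T : Set (Euc n)) ∩ Metric.closedBall 0 1 ∧
    IsCompact S ∧ μH[(d : ℝ)] S < ⊤ ∧
    ∀ f : Euc n → Euc n, IsLip f →
      (∀ x ∈ (T : Set (Euc n)) ∩ Metric.sphere 0 1, f x = x) →
      f '' S ≠ (T : Set (Euc n)) ∩ Metric.sphere 0 1

/-- `S` is countably `(ℋ^d, d)`-rectifiable. -/
def CountablyRectifiable (n d : ℕ) (S : Set (Euc n)) : Prop :=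
  ∃ f : ℕ → Euc d → Euc n, (∀ i, IsLip (f i)) ∧
    μH[(d : ℝ)] (S \ ⋃ i, Set.range (f i)) = 0

/-- A rectifiable test pair. -/
def IsRectTestPair (n d : ℕ) (S D : Set (Euc n)) : Prop :=
  IsTestPair n d S D ∧ CountablyRectifiable n d S

/-- `A` is purely `(ℋ^d, d)`-unrectifiable. -/
def PurelyUnrectifiable (n d : ℕ) (A : Set (Euc n)) : Prop :=
  ∀ f : Euc d → Euc n, IsLip f → μH[(d : ℝ)] (A ∩ Set.range f) = 0

/-- The volume `ω_d` of the unit ball of `ℝ^d`. -/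
def omegaBall (d : ℕ) : ℝ := (volume (Metric.ball (0 : Euc d) 1)).toReal

/-- The `d`-density of `ℋ^d ⌊ S` at `x` equals one. -/
def DensityOne (n d : ℕ) (S : Set (Euc n)) (x : Euc n) : Prop :=
  Filter.Tendsto
    (fun r : ℝ => μH[(d : ℝ)] (S ∩ Metric.closedBall x r) / ENNReal.ofReal (omegaBall d * r ^ d))
    (𝓝[>] (0 : ℝ)) (𝓝 1)

/-- The rectifiable part `ℛ(S)` of `S`. -/
def rectPart (n d : ℕ) (S : Set (Euc n)) : Set (Euc n) := {x ∈ S | DensityOne n d S x}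

/-- The unrectifiable part `𝒰(S)` of `S`. -/
def unrectPart (n d : ℕ) (S : Set (Euc n)) : Set (Euc n) := S \ rectPart n d S

attribute [local instance] Matrix.frobeniusNormedAddCommGroup Matrix.frobeniusNormedSpace

local instance matrixMeasurableSpace (n : ℕ) : MeasurableSpace (Matrix (Fin n) (Fin n) ℝ) :=
  borel _

/-- The standard basis of `ℝ^n`. -/
def eucBasis (n : ℕ) : Basis (Fin n) ℝ (Euc n) := (EuclideanSpace.basisFun (Fin n) ℝ).toBasis

/-- The orthogonal projection onto a subspace, as an endomorphism of `ℝ^n`. -/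
def projL (n : ℕ) (T : Submodule ℝ (Euc n)) : Euc n →ₗ[ℝ] Euc n :=
  T.subtype ∘ₗ (T.orthogonalProjection : Euc n →L[ℝ] T).toLinearMap

/-- The matrix of the orthogonal projection onto `T`. -/
def projMatrix (n : ℕ) (T : Submodule ℝ (Euc n)) : Matrix (Fin n) (Fin n) ℝ :=
  LinearMap.toMatrix (eucBasis n) (eucBasis n) (projL n T)

/-- The Grassmannian `G(n,d)`, realized as the set of orthogonal-projection matrices of
`d`-dimensional linear subspaces of `ℝ^n`. -/
def Grass (n d : ℕ) : Set (Matrix (Fin n) (Fin n) ℝ) :=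
  {P | ∃ T : Submodule ℝ (Euc n), Module.finrank ℝ T = d ∧ P = projMatrix n T}

/-- `T` is the approximate tangent `d`-plane of `S` at `y`. -/
def IsApproxTangent (n d : ℕ) (S : Set (Euc n)) (y : Euc n) (T : Submodule ℝ (Euc n)) : Prop :=
  Module.finrank ℝ T = d ∧ DensityOne n d S y ∧
    ∀ ε : ℝ, 0 < ε →
      Filter.Tendsto
        (fun r : ℝ =>
          μH[(d : ℝ)] {z | z ∈ S ∩ Metric.closedBall y r ∧
              ε * ‖z - y‖ < Metric.infDist (z - y) (T : Set (Euc n))} /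
            ENNReal.ofReal (r ^ d))
        (𝓝[>] (0 : ℝ)) (𝓝 0)

open Classical in
/-- The approximate tangent plane of `S` at `y` (junk value `⊥` if there is none). -/
def tangentPlane (n d : ℕ) (S : Set (Euc n)) (y : Euc n) : Submodule ℝ (Euc n) :=
  if h : ∃ T, IsApproxTangent n d S y T then h.choose else ⊥

/-- The anisotropic energy `Φ_F(S) = ∫_S F(Tan^d(S,y)) dℋ^d(y)`, for an integrand given as a
function of projection matrices. -/
def PhiF (n d : ℕ) (F : Matrix (Fin n) (Fin n) ℝ → ℝ) (S : Set (Euc n)) : ℝ :=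
  ∫ y in S, F (projMatrix n (tangentPlane n d S y)) ∂(μH[(d : ℝ)])

/-- `Ψ_F(S) = Φ_F(ℛ(S)) + (sup F)·ℋ^d(𝒰(S))`. -/
def PsiF (n d : ℕ) (F : Matrix (Fin n) (Fin n) ℝ → ℝ) (S : Set (Euc n)) : ℝ :=
  PhiF n d F (rectPart n d S) + sSup (F '' Grass n d) * (μH[(d : ℝ)] (unrectPart n d S)).toReal

/-- A frozen integrand: a function on `G(n,d)`, continuous and positive there. -/
def IsFrozenIntegrand (n d : ℕ) (F : Matrix (Fin n) (Fin n) ℝ → ℝ) : Prop :=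
  ContinuousOn F (Grass n d) ∧ ∀ P ∈ Grass n d, 0 < F P

/-- A smooth compactly supported vector field on `ℝ^n`. -/
def IsSmoothCptVF (n : ℕ) (g : Euc n → Euc n) : Prop :=
  ContDiff ℝ (⊤ : ℕ∞) g ∧ HasCompactSupport g

/-- The derivative matrix `Dg(y)` of a vector field `g` at `y`. -/
def Dmat (n : ℕ) (g : Euc n → Euc n) (y : Euc n) : Matrix (Fin n) (Fin n) ℝ :=
  LinearMap.toMatrix (eucBasis n) (eucBasis n) (fderiv ℝ g y : Euc n →L[ℝ] Euc n).toLinearMap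

/-- The pairing `B(T) • L`, where `T` has projection matrix `P`, for the integrand which is the
restriction of `G` to `G(n,d)`:
`B(T) • L = F(T)·(P • L) + ∇G(P) • (P^⊥ L P + (P^⊥ L P)ᵀ)`. -/
def Bpair (n : ℕ) (G : Matrix (Fin n) (Fin n) ℝ → ℝ) (P L : Matrix (Fin n) (Fin n) ℝ) : ℝ :=
  G P * (Pᵀ * L).trace +
    fderiv ℝ G P ((1 - P) * L * P + ((1 - P) * L * P)ᵀ)

/-- The anisotropic first variation `δ(T,μ)(g)` of the varifold `(ℋ^k ⌊ T) × μ`. -/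
def firstVar (n : ℕ) (G : Matrix (Fin n) (Fin n) ℝ → ℝ) (k : ℕ) (T : Submodule ℝ (Euc n))
    (μ : Measure (Matrix (Fin n) (Fin n) ℝ)) (g : Euc n → Euc n) : ℝ :=
  ∫ y in (T : Set (Euc n)), (∫ P, Bpair n G P (Dmat n g y) ∂μ) ∂(μH[(k : ℝ)])

/-- Condition (BC). -/
def CondBC (n d : ℕ) (G : Matrix (Fin n) (Fin n) ℝ → ℝ) : Prop :=
  ∀ T : Submodule ℝ (Euc n), Module.finrank ℝ T = d →
    ∀ μ : Measure (Matrix (Fin n) (Fin n) ℝ), IsProbabilityMeasure μ → μ (Grass n d)ᶜ = 0 →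
      (∀ g : Euc n → Euc n, IsSmoothCptVF n g → firstVar n G d T μ g = 0) →
      μ = Measure.dirac (projMatrix n T)

/-- The matrix `A(μ) = ∫ B(T) dμ(T)`. -/
def Amat (n : ℕ) (G : Matrix (Fin n) (Fin n) ℝ → ℝ)
    (μ : Measure (Matrix (Fin n) (Fin n) ℝ)) : Matrix (Fin n) (Fin n) ℝ :=
  Matrix.of fun i j => ∫ P, Bpair n G P (Matrix.single i j 1) ∂μ

/-- The atomic condition (AC). -/
def CondAC (n d : ℕ) (G : Matrix (Fin n) (Fin n) ℝ → ℝ) : Prop :=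
  ∀ μ : Measure (Matrix (Fin n) (Fin n) ℝ), IsProbabilityMeasure μ → μ (Grass n d)ᶜ = 0 →
    Module.finrank ℝ (LinearMap.ker (Matrix.toLin' (Amat n G μ))) ≤ n - d ∧
      (Module.finrank ℝ (LinearMap.ker (Matrix.toLin' (Amat n G μ))) = n - d →
        ∃ T₀ : Submodule ℝ (Euc n), Module.finrank ℝ T₀ = d ∧
          μ = Measure.dirac (projMatrix n T₀))

/-- The cube `Q₀ = [-1,1]^d ⊆ ℝ^d`. -/
def cubeQ0 (d : ℕ) : Set (Euc d) := {x | ∀ i, x i ∈ Set.Icc (-1 : ℝ) 1}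

/-- The boundary `∂Q₀` of `[-1,1]^d`. -/
def cubeQ0Bdry (d : ℕ) : Set (Euc d) :=
  {x | (∀ i, x i ∈ Set.Icc (-1 : ℝ) 1) ∧ ∃ i, x i = -1 ∨ x i = 1}

/-- `(S, Q)` is a cubical test pair. -/
def IsCubicalTestPair (n d : ℕ) (S Q : Set (Euc n)) : Prop :=
  ∃ φ : Euc d →ₗᵢ[ℝ] Euc n, Q = φ '' cubeQ0 d ∧
    IsCompact S ∧ μH[(d : ℝ)] S < ⊤ ∧ CountablyRectifiable n d S ∧
    ∀ f : Euc n → Euc n, IsLip f → (∀ x ∈ φ '' cubeQ0Bdry d, f x = x) →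
      f '' S ≠ φ '' cubeQ0Bdry d

/-- Center of the subcube of `[-1,1]^d` indexed by `c : Fin d → Fin k` in the subdivision into
`k^d` congruent subcubes. -/
def subcubeCenter (d k : ℕ) (c : Fin d → Fin k) : Euc d :=
  (EuclideanSpace.equiv (Fin d) ℝ).symm fun i => -1 + (2 * (c i : ℕ) + 1) / (k : ℝ)

/-- The `k`-multiplication of `(X, Q)` where `Q = φ[[-1,1]^d]`: the union of the `k^d` rescaled
copies of `X` placed in the subcubes of `Q`. -/
def kMultiplication (n d k : ℕ) (φ : Euc d →ₗᵢ[ℝ] Euc n) (X : Set (Euc n)) : Set (Euc n) :=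
  ⋃ c : Fin d → Fin k, (fun x => φ (subcubeCenter d k c) + (k : ℝ)⁻¹ • x) '' X

/-- A good family of cubical test pairs. -/
def IsGoodFamily (n d : ℕ) (P : Set (Set (Euc n) × Set (Euc n))) : Prop :=
  (∀ p ∈ P, IsCubicalTestPair n d p.1 p.2) ∧
  (∀ X Q, (X, Q) ∈ P → ∀ N : ℕ, ∀ φ : Euc d →ₗᵢ[ℝ] Euc n, Q = φ '' cubeQ0 d →
    (kMultiplication n d (2 ^ N) φ X, Q) ∈ P) ∧
  (∀ X Q, (X, Q) ∈ P → ∀ f : Euc n → Euc n, IsLip f →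
    (∃ φ : Euc d →ₗᵢ[ℝ] Euc n, Q = φ '' cubeQ0 d ∧ ∀ x ∈ φ '' cubeQ0Bdry d, f x = x) →
    (f '' X, Q) ∈ P)

/-- A dyadic cube in `ℝ^n`: dimension `dim`, side `2^{-scale}`, corner `2^{-scale} • pos`,
spanned along the coordinate directions selected by the injection `emb`. -/
structure DyadicCube (n : ℕ) where
  dim : ℕ
  scale : ℤ
  pos : Fin n → ℤ
  emb : Fin dim → Fin n
  inj : Function.Injective emb

namespace DyadicCube

/-- The side length of a dyadic cube. -/
def side {n : ℕ} (K : DyadicCube n) : ℝ := (2 : ℝ) ^ (-K.scale)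

/-- The `j`-th coordinate of the corner of a dyadic cube. -/
def corner {n : ℕ} (K : DyadicCube n) (j : Fin n) : ℝ := (2 : ℝ) ^ (-K.scale) * K.pos j

/-- The underlying set of a dyadic cube. -/
def carrier {n : ℕ} (K : DyadicCube n) : Set (Euc n) :=
  {x | (∀ j : Fin n, j ∈ Set.range K.emb → x j ∈ Set.Icc (K.corner j) (K.corner j + K.side)) ∧
       ∀ j : Fin n, j ∉ Set.range K.emb → x j = K.corner j}

/-- The cubical boundary `∂_c K` of a dyadic cube. -/
def cbdry {n : ℕ} (K : DyadicCube n) : Set (Euc n) :=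
  {x ∈ K.carrier | ∃ j ∈ Set.range K.emb, x j = K.corner j ∨ x j = K.corner j + K.side}

/-- The cubical interior of a dyadic cube. -/
def cint {n : ℕ} (K : DyadicCube n) : Set (Euc n) := K.carrier \ K.cbdry

/-- `L` is a face of `K`. -/
def IsFaceOf {n : ℕ} (L K : DyadicCube n) : Prop :=
  L.carrier ⊆ K.carrier ∧ L.scale = K.scale ∧ L.dim ≤ K.dim

end DyadicCube

/-- An admissible family of top-dimensional dyadic cubes. -/
def Admissible (n : ℕ) (F : Set (DyadicCube n)) : Prop :=
  (∀ K ∈ F, K.dim = n) ∧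
  (∀ K ∈ F, ∀ L ∈ F, K.carrier ≠ L.carrier → K.cint ∩ L.cint = ∅) ∧
  (∀ K ∈ F, ∀ L ∈ F, (K.carrier ∩ L.carrier).Nonempty → (K.scale - L.scale).natAbs ≤ 1) ∧
  (∀ K ∈ F, K.cbdry ⊆ ⋃ L ∈ {L ∈ F | L.carrier ≠ K.carrier}, DyadicCube.carrier L)

/-- The cubical complex `CX(𝓕)` of an admissible family `𝓕`. -/
def CXcomplex (n : ℕ) (F : Set (DyadicCube n)) : Set (DyadicCube n) :=
  {K | (∃ M ∈ F, K.IsFaceOf M) ∧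
    (0 < K.dim → ∀ L : DyadicCube n, (∃ M ∈ F, L.IsFaceOf M) → L.dim = K.dim →
      (K.cint ∩ L.cint).Nonempty → K.side ≤ L.side)}

/-- `A` is a strong deformation retract of `W`. -/
def IsStrongDeformationRetract {α : Type*} [TopologicalSpace α] (A W : Set α) : Prop :=
  A ⊆ W ∧ ∃ H : α → ℝ → α,
    ContinuousOn (fun p : α × ℝ => H p.1 p.2) (W ×ˢ Set.Icc (0 : ℝ) 1) ∧
    (∀ x ∈ W, ∀ t ∈ Set.Icc (0 : ℝ) 1, H x t ∈ W) ∧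
    (∀ x ∈ W, H x 0 = x) ∧ (∀ x ∈ W, H x 1 ∈ A) ∧
    (∀ x ∈ A, ∀ t ∈ Set.Icc (0 : ℝ) 1, H x t = x)

/-- The pair `(Y, S)` has the homotopy extension property. -/
def HasHEP {α : Type*} [TopologicalSpace α] (Y S : Set α) : Prop :=
  ∀ (Z : Type*) [TopologicalSpace Z] (h : α × ℝ → Z),
    ContinuousOn h (Y ×ˢ {(0 : ℝ)} ∪ S ×ˢ Set.Icc (0 : ℝ) 1) →
    ∃ H : α × ℝ → Z, ContinuousOn H (Y ×ˢ Set.Icc (0 : ℝ) 1) ∧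
      ∀ p ∈ Y ×ˢ {(0 : ℝ)} ∪ S ×ˢ Set.Icc (0 : ℝ) 1, H p = h p

/-- `A` is a Lipschitz retract of `W`. -/
def IsLipschitzRetractOf {α : Type*} [PseudoEMetricSpace α] (A W : Set α) : Prop :=
  A ⊆ W ∧ ∃ r : α → α, (∃ K : ℝ≥0, LipschitzOnWith K r W) ∧
    (∀ x ∈ W, r x ∈ A) ∧ ∀ x ∈ A, r x = x

/-- The support of a measure. -/
def msupport {α : Type*} [TopologicalSpace α] [MeasurableSpace α] (μ : Measure α) : Set α :=
  {x | ∀ U : Set α, IsOpen U → x ∈ U → μ U ≠ 0}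

/-- The pointwise Lipschitz constant `lip f (x) = limsup_{y → x} dist(f y, f x) / dist(y, x)`. -/
def plip {E F : Type*} [MetricSpace E] [MetricSpace F] (f : E → F) (x : E) : ℝ≥0∞ :=
  Filter.limsup (fun y => ENNReal.ofReal (dist (f y) (f x) / dist y x)) (𝓝[≠] x)

/-- `π` is the central projection from `a` onto the boundary of the closed convex set `C`. -/
def IsCentralProj (k : ℕ) (C : Set (Euc k)) (a : Euc k) (π : Euc k → Euc k) : Prop :=
  (∀ x, x ∉ interior C → π x = x) ∧
  (∀ x ∈ interior C, x ≠ a → π x ∈ frontier C ∧ ∃ t : ℝ, 0 < t ∧ π x - a = t • (x - a))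

/-- The cube `Q = [0,1]^d × {0}^{n-d} ⊆ ℝ^n`. -/
def QSet (n d : ℕ) : Set (Euc n) :=
  {x | (∀ i : Fin n, (i : ℕ) < d → x i ∈ Set.Icc (0 : ℝ) 1) ∧
       ∀ i : Fin n, d ≤ (i : ℕ) → x i = 0}

/-- The cubical boundary `∂_c Q` of `[0,1]^d × {0}^{n-d}`. -/
def QBdry (n d : ℕ) : Set (Euc n) :=
  {x ∈ QSet n d | ∃ i : Fin n, (i : ℕ) < d ∧ (x i = 0 ∨ x i = 1)}

/-- The center of `[0,1]^d × {0}^{n-d}`. -/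
def QCenter (n d : ℕ) : Euc n :=
  (EuclideanSpace.equiv (Fin n) ℝ).symm fun i => if (i : ℕ) < d then (1 / 2 : ℝ) else 0

/-- The center of the subcube of `[0,1]^d × {0}^{n-d}` indexed by `c` in the subdivision into
`k^d` congruent subcubes. -/
def subcubeCenterQ (n d k : ℕ) (c : Fin d → Fin k) : Euc n :=
  (EuclideanSpace.equiv (Fin n) ℝ).symm fun i =>
    if h : (i : ℕ) < d then (((c ⟨(i : ℕ), h⟩ : ℕ) : ℝ) + 1 / 2) / (k : ℝ) else 0

/-- The lifted `k`-multiplication of `(X, Q)`, `Q = [0,1]^d × {0}^{n-d}`, inside `ℝ^n × ℝ^M`,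
with the copy indexed by `c` lifted in the direction of the basis vector `e_{ι c}`. -/
def liftedMult (n d k M : ℕ) (ι : (Fin d → Fin k) → Fin M) (X : Set (Euc n)) :
    Set (Euc n × Euc M) :=
  ⋃ c : Fin d → Fin k,
    (fun x => (subcubeCenterQ n d k c + (k : ℝ)⁻¹ • (x - QCenter n d),
               Metric.infDist x (QBdry n d) • EuclideanSpace.single (ι c) (1 : ℝ))) '' X

section Aux

theorem myPaste {α β : Type*} [TopologicalSpace α] [TopologicalSpace β] {f : α → β}
    {A B : Set α} (hA : IsClosed A) (hB : IsClosed B)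
    (fA : ContinuousOn f A) (fB : ContinuousOn f B) : ContinuousOn f (A ∪ B) := by
  intro x hx
  rcases hx with hx | hx
  · refine ContinuousWithinAt.union (fA x hx) ?_
    by_cases hxB : x ∈ B
    · exact fB x hxB
    · exact continuousWithinAt_of_notMem_closure (by rwa [hB.closure_eq])
  · refine ContinuousWithinAt.union ?_ (fB x hx)
    by_cases hxA : x ∈ A
    · exact fA x hxA
    · exact continuousWithinAt_of_notMem_closure (by rwa [hA.closure_eq])

theorem lipApproxReal {E : Type*} [MetricSpace E] {X : Set E} (hX : IsCompact X)
    (hne : X.Nonempty) {h : E → ℝ} (hc : ContinuousOn h X) {δ : ℝ} (hδ : 0 < δ) :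
    ∃ g : E → ℝ, (∃ K : ℝ≥0, LipschitzWith K g) ∧ ∀ x ∈ X, |g x - h x| ≤ δ := by
  obtain ⟨d₀, hd₀, hmod⟩ := Metric.uniformContinuousOn_iff_le.1
    (hX.uniformContinuousOn_of_continuous hc) δ hδ
  obtain ⟨a, haX, hmin⟩ := hX.exists_isMinOn hne hc
  obtain ⟨b, hbX, hmax⟩ := hX.exists_isMaxOn hne hc
  set m := h a with hm
  set M := h b with hM
  have hmM : m ≤ M := hmin hbX
  have hKnn : 0 ≤ (M - m) / d₀ := div_nonneg (by linarith) hd₀.le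
  set K : ℝ≥0 := ⟨(M - m) / d₀, hKnn⟩ with hK
  haveI : Nonempty X := hne.to_subtype
  set g : E → ℝ := fun x => ⨅ y : X, (h y + K * dist x y) with hg
  have bdd : ∀ x : E, BddBelow (range fun y : X => h (y : E) + K * dist x y) := by
    intro x
    refine ⟨m, forall_mem_range.2 fun y => ?_⟩
    have h1 : m ≤ h y := hmin y.2
    have h2 : (0:ℝ) ≤ K * dist x y := by positivity
    linarith
  have key : ∀ x z : E, g x ≤ g z + K * dist x z := by
    intro x z
    rw [← sub_le_iff_le_add]
    refine le_ciInf fun y => ?_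
    have h1 : g x ≤ h y + K * dist x (y : E) := ciInf_le (bdd x) y
    have h2 : dist x (y : E) ≤ dist x z + dist z (y : E) := dist_triangle x z y
    have h3 : (0:ℝ) ≤ (K:ℝ) := K.2
    nlinarith
  refine ⟨g, ⟨K, LipschitzWith.of_dist_le_mul fun x z => ?_⟩, fun x hx => ?_⟩
  · rw [Real.dist_eq, abs_sub_le_iff]
    constructor
    · have := key x z; linarith
    · have := key z x; rw [dist_comm]; linarith
  · rw [abs_sub_le_iff]
    constructor
    · have h1 : g x ≤ h x + K * dist x x := ciInf_le (bdd x) ⟨x, hx⟩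
      rw [dist_self] at h1
      linarith
    · rw [sub_le_iff_le_add]
      have : h x - δ ≤ g x := by
        refine le_ciInf fun y => ?_
        rcases le_or_gt (dist x (y : E)) d₀ with hle | hlt
        · have h1 : dist (h x) (h y) ≤ δ := hmod x hx y y.2 hle
          rw [Real.dist_eq, abs_sub_le_iff] at h1
          have h2 : (0:ℝ) ≤ K * dist x y := by positivity
          linarith [h1.1]
        · have h1 : m ≤ h y := hmin y.2
          have h2 : h x ≤ M := hmax hx
          have h3 : (K : ℝ) * d₀ ≤ K * dist x y :=
            mul_le_mul_of_nonneg_left hlt.le K.2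
          have h4 : (K : ℝ) * d₀ = M - m := by
            rw [hK]; show (M - m) / d₀ * d₀ = M - m; field_simp
          linarith
      linarith

theorem euc_dist_le {n : ℕ} (v w : EuclideanSpace ℝ (Fin n)) (c : ℝ) (hc : 0 ≤ c)
    (h : ∀ i, dist (v i) (w i) ≤ c) : dist v w ≤ (n + 1) * c := by
  rw [EuclideanSpace.dist_eq]
  have h1 : ∑ i, dist (v i) (w i) ^ 2 ≤ ((n + 1 : ℝ) * c) ^ 2 := by
    calc ∑ i, dist (v i) (w i) ^ 2 ≤ ∑ _i : Fin n, c ^ 2 :=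
          Finset.sum_le_sum fun i _ => pow_le_pow_left₀ dist_nonneg (h i) 2
      _ = (n : ℝ) * c ^ 2 := by simp [mul_comm]
      _ ≤ ((n + 1 : ℝ) * c) ^ 2 := by nlinarith [Nat.cast_nonneg (α := ℝ) n]
  calc Real.sqrt (∑ i, dist (v i) (w i) ^ 2) ≤ Real.sqrt (((n + 1 : ℝ) * c) ^ 2) :=
        Real.sqrt_le_sqrt h1
    _ = (n + 1 : ℝ) * c := Real.sqrt_sq (by positivity)

theorem lipApproxEuc {n : ℕ} {X : Set (EuclideanSpace ℝ (Fin n))} (hX : IsCompact X)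
    {r : EuclideanSpace ℝ (Fin n) → EuclideanSpace ℝ (Fin n)} (hc : ContinuousOn r X)
    {δ : ℝ} (hδ : 0 < δ) :
    ∃ g : EuclideanSpace ℝ (Fin n) → EuclideanSpace ℝ (Fin n),
      (∃ K : ℝ≥0, LipschitzWith K g) ∧ ∀ x ∈ X, dist (g x) (r x) ≤ δ := by
  rcases X.eq_empty_or_nonempty with rfl | hne
  · exact ⟨id, ⟨1, LipschitzWith.id⟩, by simp⟩
  set e := EuclideanSpace.equiv (Fin n) ℝ with he
  have hδ' : 0 < δ / (n + 1) := by positivity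
  have hcoord : ∀ i : Fin n, ContinuousOn (fun y => r y i) X := fun i =>
    ((continuous_apply i).comp e.continuous).comp_continuousOn hc
  choose g' hK' happrox using fun i : Fin n => lipApproxReal hX hne (hcoord i) hδ'
  choose K' hK' using hK'
  set K₀ : ℝ≥0 := Finset.univ.sup K' with hK₀
  set g : EuclideanSpace ℝ (Fin n) → EuclideanSpace ℝ (Fin n) :=
    fun x => e.symm fun i => g' i x with hg
  have hgi : ∀ x i, g x i = g' i x := fun x i => rfl
  refine ⟨g, ⟨(n + 1) * K₀, LipschitzWith.of_dist_le_mul fun x z => ?_⟩, fun x hx => ?_⟩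
  · have h1 : ∀ i, dist (g x i) (g z i) ≤ (K₀ : ℝ) * dist x z := by
      intro i
      rw [hgi, hgi]
      refine ((hK' i).dist_le_mul x z).trans ?_
      exact mul_le_mul_of_nonneg_right
        (NNReal.coe_le_coe.2 (Finset.le_sup (Finset.mem_univ i))) dist_nonneg
    have := euc_dist_le (g x) (g z) _ (by positivity) h1
    calc dist (g x) (g z) ≤ (n + 1 : ℝ) * ((K₀ : ℝ) * dist x z) := this
      _ = (((n + 1) * K₀ : ℝ≥0) : ℝ) * dist x z := by push_cast; ring
  · have h1 : ∀ i, dist (g x i) (r x i) ≤ δ / (n + 1) := by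
      intro i
      rw [hgi, Real.dist_eq]
      exact happrox i x hx
    have := euc_dist_le (g x) (r x) _ hδ'.le h1
    calc dist (g x) (r x) ≤ (n + 1 : ℝ) * (δ / (n + 1)) := this
      _ = δ := by field_simp

theorem lipOn_smul {α : Type*} [PseudoMetricSpace α] {E : Type*} [NormedAddCommGroup E]
    [NormedSpace ℝ E] {s : Set α} {f : α → ℝ} {h : α → E} {Kf Kh : ℝ≥0} {A B : ℝ}
    (hA0 : 0 ≤ A) (hB0 : 0 ≤ B)
    (hf : LipschitzOnWith Kf f s) (hh : LipschitzOnWith Kh h s)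
    (hA : ∀ x ∈ s, |f x| ≤ A) (hB : ∀ x ∈ s, ‖h x‖ ≤ B) :
    LipschitzOnWith ⟨A * Kh + B * Kf, by positivity⟩ (fun x => f x • h x) s := by
  apply LipschitzOnWith.of_dist_le_mul
  intro x hx y hy
  have h1 : dist (f x • h x) (f y • h y) ≤ |f x| * ‖h x - h y‖ + |f x - f y| * ‖h y‖ := by
    rw [dist_eq_norm]
    calc ‖f x • h x - f y • h y‖ = ‖f x • (h x - h y) + (f x - f y) • h y‖ := by
          rw [smul_sub, sub_smul]; abel_nf
      _ ≤ ‖f x • (h x - h y)‖ + ‖(f x - f y) • h y‖ := norm_add_le _ _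
      _ = |f x| * ‖h x - h y‖ + |f x - f y| * ‖h y‖ := by
          rw [norm_smul, norm_smul, Real.norm_eq_abs, Real.norm_eq_abs]
  have h2 : dist (f x) (f y) ≤ Kf * dist x y := hf.dist_le_mul x hx y hy
  have h3 : dist (h x) (h y) ≤ Kh * dist x y := hh.dist_le_mul x hx y hy
  rw [Real.dist_eq] at h2
  rw [dist_eq_norm] at h3
  have h4 := hA x hx
  have h5 := hB y hy
  have h8 : ‖h y‖ ≥ 0 := norm_nonneg _
  calc dist (f x • h x) (f y • h y) ≤ |f x| * ‖h x - h y‖ + |f x - f y| * ‖h y‖ := h1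
    _ ≤ A * ((Kh:ℝ) * dist x y) + ((Kf:ℝ) * dist x y) * B := by
        refine add_le_add (mul_le_mul h4 h3 (norm_nonneg _) hA0) ?_
        exact mul_le_mul h2 h5 h8 (by positivity)
    _ ≤ (⟨A * Kh + B * Kf, by positivity⟩ : ℝ≥0) * dist x y := by
        push_cast; nlinarith [dist_nonneg (x := x) (y := y)]

theorem tietzeEuc {n : ℕ} {X : Set (EuclideanSpace ℝ (Fin n))} (hX : IsClosed X)
    {f : EuclideanSpace ℝ (Fin n) → EuclideanSpace ℝ (Fin n)} (hf : ContinuousOn f X) :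
    ∃ g : EuclideanSpace ℝ (Fin n) → EuclideanSpace ℝ (Fin n),
      Continuous g ∧ Set.EqOn g f X := by
  obtain ⟨g, hg⟩ := ContinuousMap.exists_restrict_eq (Y := EuclideanSpace ℝ (Fin n)) hX
    (ContinuousMap.mk (X.restrict f) hf.restrict)
  refine ⟨g, g.continuous, fun x hx => ?_⟩
  have := congrFun (congrArg ContinuousMap.toFun hg) ⟨x, hx⟩
  exact this

end Aux

/-- Let `S ⊆ X ⊆ ℝ^n` be compact, `ε ∈ (0,1)`, suppose `(Y, S)` has the
homotopy extension property for every `Y` with `S ⊆ Int Y`, and suppose there is a Lipschitz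
retraction `π` of the `ε`-thickening of `S` onto `S`. Then the following are equivalent:
(1) `S` is a Lipschitz retract of `X`; (2) `S` is a retract of `X`; (3) for some `δ ∈ (0,ε)`,
`S` is a retract of the `δ`-thickening of `X`; (4) there is a continuous `f : X → S` whose
restriction to `S` is homotopic to the identity of `S`. -/
theorem retraction_tfae (n : ℕ) (hn : 1 ≤ n)
    (S X : Set (Euc n)) (hSX : S ⊆ X) (hS : IsCompact S) (hX : IsCompact X)
    (ε : ℝ) (hε : ε ∈ Set.Ioo (0 : ℝ) 1)
    (hHEP : ∀ Y : Set (Euc n), S ⊆ interior Y → HasHEP Y S)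
    (π : Euc n → Euc n)
    (hπlip : ∃ K : ℝ≥0, LipschitzOnWith K π (S + Metric.closedBall 0 ε))
    (hπmem : ∀ x ∈ S + Metric.closedBall (0 : Euc n) ε, π x ∈ S)
    (hπid : ∀ x ∈ S, π x = x) :
    List.TFAE
      [ ∃ r : Euc n → Euc n, (∃ K : ℝ≥0, LipschitzOnWith K r X) ∧
          (∀ x ∈ X, r x ∈ S) ∧ ∀ x ∈ S, r x = x,
        ∃ r : Euc n → Euc n, ContinuousOn r X ∧ (∀ x ∈ X, r x ∈ S) ∧ ∀ x ∈ S, r x = x,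
        ∃ δ : ℝ, δ ∈ Set.Ioo (0 : ℝ) ε ∧ ∃ r : Euc n → Euc n,
          ContinuousOn r (X + Metric.closedBall 0 δ) ∧
          (∀ x ∈ X + Metric.closedBall (0 : Euc n) δ, r x ∈ S) ∧ ∀ x ∈ S, r x = x,
        ∃ f : Euc n → Euc n, ContinuousOn f X ∧ (∀ x ∈ X, f x ∈ S) ∧
          ∃ H : Euc n → ℝ → Euc n,
            ContinuousOn (fun q : Euc n × ℝ => H q.1 q.2) (S ×ˢ Set.Icc (0 : ℝ) 1) ∧
            (∀ x ∈ S, ∀ t ∈ Set.Icc (0 : ℝ) 1, H x t ∈ S) ∧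
            (∀ x ∈ S, H x 0 = f x) ∧ ∀ x ∈ S, H x 1 = x ] := by
  obtain ⟨hε0, hε1⟩ := hε
  obtain ⟨Kπ, hπK⟩ := hπlip
  have hπcont : ContinuousOn π (S + Metric.closedBall 0 ε) := hπK.continuousOn
  -- membership helper for thickenings
  have hthick : ∀ (T : Set (Euc n)) (ρ : ℝ), 0 ≤ ρ → ∀ z s, s ∈ T → dist z s ≤ ρ →
      z ∈ T + Metric.closedBall (0 : Euc n) ρ := by
    intro T ρ hρ z s hs hd
    refine Set.mem_add.2 ⟨s, hs, z - s, ?_, by abel⟩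
    rw [Metric.mem_closedBall, dist_zero_right, ← dist_eq_norm]
    exact hd
  have hself : ∀ (T : Set (Euc n)) (ρ : ℝ), 0 ≤ ρ → ∀ s ∈ T,
      s ∈ T + Metric.closedBall (0 : Euc n) ρ := fun T ρ hρ s hs =>
    hthick T ρ hρ s s hs (by simpa using hρ)
  tfae_have 1 → 3 := by
    rintro ⟨r, ⟨K, hK⟩, hrS, hrid⟩
    rcases S.eq_empty_or_nonempty with hSe | hSne
    · have hXe : X = ∅ := by
        rw [eq_empty_iff_forall_notMem]
        intro x hx
        have := hrS x hx
        rw [hSe] at this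
        exact this
      refine ⟨ε/2, ⟨by linarith, by linarith⟩, id, ?_, ?_, ?_⟩
      · rw [hXe, Set.empty_add]; exact continuousOn_empty _
      · rw [hXe, Set.empty_add]; intro x hx; exact absurd hx (notMem_empty x)
      · intro x hx; rw [hSe] at hx; exact absurd hx (notMem_empty x)
    · -- extend r to a globally Lipschitz map
      set e := EuclideanSpace.equiv (Fin n) ℝ with he
      have hlip1 : LipschitzOnWith (‖(e.toContinuousLinearMap)‖₊ * K)
          (fun x => e (r x)) X :=
        (e.toContinuousLinearMap.lipschitz).comp_lipschitzOnWith hK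
      obtain ⟨g₁, hg₁lip, hg₁eq⟩ := hlip1.extend_pi
      set g : Euc n → Euc n := fun x => e.symm (g₁ x) with hg
      have hglip : LipschitzWith (‖(e.symm.toContinuousLinearMap)‖₊ * _)
          g := (e.symm.toContinuousLinearMap.lipschitz).comp hg₁lip
      set Kg := ‖(e.symm.toContinuousLinearMap)‖₊ * (‖(e.toContinuousLinearMap)‖₊ * K) with hKg
      have hgeq : ∀ x ∈ X, g x = r x := by
        intro x hx
        rw [hg]
        simp only [← hg₁eq hx]
        exact e.symm_apply_apply (r x)
      set δ : ℝ := min (ε/2) (ε/(2*(Kg+1))) with hδdef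
      have hδpos : 0 < δ := lt_min (by linarith) (by positivity)
      have hδε : δ < ε := lt_of_le_of_lt (min_le_left _ _) (by linarith)
      have hmaps : ∀ z ∈ X + Metric.closedBall (0 : Euc n) δ,
          g z ∈ S + Metric.closedBall (0 : Euc n) ε := by
        intro z hz
        obtain ⟨x, hx, v, hv, rfl⟩ := Set.mem_add.1 hz
        have hd : dist (g (x + v)) (g x) ≤ Kg * δ := by
          refine (hglip.dist_le_mul _ _).trans ?_
          have : dist (x + v) x = ‖v‖ := by
            rw [dist_eq_norm]; congr 1; abel
          rw [this]
          refine mul_le_mul_of_nonneg_left ?_ Kg.2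
          rwa [Metric.mem_closedBall, dist_zero_right] at hv
        have hKgδ : (Kg : ℝ) * δ ≤ ε := by
          have h1 : δ ≤ ε/(2*(Kg+1)) := min_le_right _ _
          have h2 : (Kg : ℝ) ≥ 0 := Kg.2
          have h3 : (Kg:ℝ) * δ ≤ Kg * (ε/(2*(Kg+1))) := mul_le_mul_of_nonneg_left h1 h2
          have h4 : (Kg:ℝ) * (ε/(2*(Kg+1))) ≤ ε := by
            rw [← mul_div_assoc, div_le_iff₀ (by positivity)]
            nlinarith
          linarith
        exact hthick S ε hε0.le _ (r x) (hrS x hx)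
          (by rw [hgeq x hx] at hd; linarith)
      refine ⟨δ, ⟨hδpos, hδε⟩, π ∘ g, ?_, ?_, ?_⟩
      · exact hπcont.comp hglip.continuous.continuousOn hmaps
      · intro z hz
        exact hπmem _ (hmaps z hz)
      · intro x hx
        have h1 : g x = x := by rw [hgeq x (hSX hx)]; exact hrid x hx
        have h2 : (π ∘ g) x = π x := by rw [Function.comp_apply, h1]
        rw [h2]
        exact hπid x hx
  tfae_have 3 → 2 := by
    rintro ⟨δ, hδ, r, hrc, hrS, hrid⟩
    have hsub : X ⊆ X + Metric.closedBall (0 : Euc n) δ := fun x hx =>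
      hself X δ hδ.1.le x hx
    exact ⟨r, hrc.mono hsub, fun x hx => hrS x (hsub hx), hrid⟩
  tfae_have 2 → 4 := by
    rintro ⟨r, h1, h2, h3⟩
    exact ⟨r, h1, h2, fun x _ => x, continuous_fst.continuousOn,
      fun x hx t _ => hx, fun x hx => (h3 x hx).symm, fun x _ => rfl⟩
  tfae_have 2 → 1 := by
    rintro ⟨r, hrc, hrS, hrid⟩
    rcases S.eq_empty_or_nonempty with hSe | hSne
    · have hXe : X = ∅ := by
        rw [eq_empty_iff_forall_notMem]
        intro x hx
        have := hrS x hx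
        rw [hSe] at this
        exact this
      refine ⟨id, ⟨1, ?_⟩, ?_, ?_⟩
      · rw [hXe]; exact (LipschitzWith.id).lipschitzOnWith
      · intro x hx; rw [hXe] at hx; exact absurd hx (notMem_empty x)
      · intro x hx; rw [hSe] at hx; exact absurd hx (notMem_empty x)
    · obtain ⟨η₁, hη₁, hmod⟩ := Metric.uniformContinuousOn_iff_le.1
        (hX.uniformContinuousOn_of_continuous hrc) (ε/8) (by linarith)
      set η : ℝ := min η₁ (ε/8) with hηdef
      have hηpos : 0 < η := lt_min hη₁ (by linarith)
      have hη8 : η ≤ ε/8 := min_le_right _ _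
      obtain ⟨g, ⟨Kg, hKg⟩, hgapp⟩ := lipApproxEuc hX hrc (δ := ε/8) (by linarith)
      set lam : Euc n → ℝ := fun x => max (1 - Metric.infDist x S / η) 0 with hlamdef
      have hlam01 : ∀ x, 0 ≤ lam x ∧ lam x ≤ 1 := by
        intro x
        refine ⟨le_max_right _ _, ?_⟩
        have h0 : 0 ≤ Metric.infDist x S / η :=
          div_nonneg Metric.infDist_nonneg hηpos.le
        rw [hlamdef]
        simp only [max_le_iff]
        constructor <;> [linarith; linarith]
      have hlamS : ∀ x ∈ S, lam x = 1 := by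
        intro x hx
        rw [hlamdef]
        simp [Metric.infDist_zero_of_mem hx]
      have hinf : ∀ x y : Euc n, |Metric.infDist x S - Metric.infDist y S| ≤ dist x y := by
        intro x y
        have := (lipschitz_infDist_pt S).dist_le_mul x y
        rw [Real.dist_eq] at this
        simpa using this
      have hlamlip : LipschitzWith (⟨1/η, by positivity⟩ : ℝ≥0) lam := by
        refine LipschitzWith.of_dist_le_mul fun x y => ?_
        rw [Real.dist_eq]
        have h1 : |lam x - lam y|
            ≤ |(1 - Metric.infDist x S / η) - (1 - Metric.infDist y S / η)| :=
          abs_max_sub_max_le_abs _ _ _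
        have h2 : (1 - Metric.infDist x S / η) - (1 - Metric.infDist y S / η)
            = (Metric.infDist y S - Metric.infDist x S) / η := by ring
        have h3 : |(Metric.infDist y S - Metric.infDist x S) / η|
            = |Metric.infDist y S - Metric.infDist x S| / η := by
          rw [abs_div, abs_of_pos hηpos]
        have h4 := hinf y x
        show |lam x - lam y| ≤ 1/η * dist x y
        calc |lam x - lam y| ≤ |Metric.infDist y S - Metric.infDist x S| / η := by
              rw [← h3, ← h2]; exact h1
          _ ≤ dist y x / η := by gcongr
          _ = 1/η * dist x y := by rw [dist_comm]; ring
      set g₁ : Euc n → Euc n := fun x => g x + lam x • (x - g x) with hg₁def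
      obtain ⟨B, hB⟩ := hX.exists_bound_of_continuousOn
        (continuousOn_id.sub hKg.continuous.continuousOn)
      have hsm :=
        lipOn_smul (A := 1) (B := max B 0) zero_le_one (le_max_right _ _)
          (hlamlip.lipschitzOnWith (s := X)) ((LipschitzWith.id.sub hKg).lipschitzOnWith (s := X))
          (fun x hx => by
            rw [abs_of_nonneg (hlam01 x).1]; exact (hlam01 x).2)
          (fun x hx => le_max_of_le_left (hB x hx))
      have hg₁lip := (hKg.lipschitzOnWith (s := X)).add hsm
      have hg₁S : ∀ x ∈ S, g₁ x = x := by
        intro x hx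
        rw [hg₁def]
        simp only [hlamS x hx, one_smul]
        abel
      have hmaps : ∀ x ∈ X, g₁ x ∈ S + Metric.closedBall (0 : Euc n) ε := by
        intro x hx
        rcases le_or_gt η (Metric.infDist x S) with hfar | hnear
        · have hlam0 : lam x = 0 := by
            rw [hlamdef]
            apply max_eq_right
            have h1 : 1 ≤ Metric.infDist x S / η := (one_le_div hηpos).2 hfar
            linarith
          have he : g₁ x = g x := by rw [hg₁def]; simp [hlam0]
          rw [he]
          exact hthick S ε hε0.le _ (r x) (hrS x hx) ((hgapp x hx).trans (by linarith))
        · obtain ⟨s, hs, hds⟩ := (Metric.infDist_lt_iff hSne).1 hnear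
          apply hthick S ε hε0.le _ s hs
          have e1 : g₁ x - s = (1 - lam x) • (g x - s) + lam x • (x - s) := by
            rw [hg₁def]
            simp only [sub_smul, smul_sub, one_smul]
            abel
          have e2 : ‖g₁ x - s‖ ≤ (1 - lam x) * ‖g x - s‖ + lam x * ‖x - s‖ := by
            rw [e1]
            refine (norm_add_le _ _).trans ?_
            rw [norm_smul, norm_smul, Real.norm_eq_abs, Real.norm_eq_abs,
              abs_of_nonneg (by linarith [(hlam01 x).2]), abs_of_nonneg (hlam01 x).1]
          have e3 : ‖g x - s‖ ≤ ε/8 + ε/8 := by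
            have d1 : dist (g x) (r x) ≤ ε/8 := hgapp x hx
            have d2 : dist (r x) (r s) ≤ ε/8 :=
              hmod x hx s (hSX hs) (hds.le.trans (min_le_left _ _))
            have d3 : r s = s := hrid s hs
            calc ‖g x - s‖ = dist (g x) s := (dist_eq_norm _ _).symm
              _ ≤ dist (g x) (r x) + dist (r x) s := dist_triangle _ _ _
              _ = dist (g x) (r x) + dist (r x) (r s) := by rw [d3]
              _ ≤ ε/8 + ε/8 := add_le_add d1 d2
          have e4 : ‖x - s‖ ≤ η := by rw [← dist_eq_norm]; exact hds.le
          rw [dist_eq_norm]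
          have l1 := (hlam01 x).1
          have l2 := (hlam01 x).2
          nlinarith [norm_nonneg (g x - s), norm_nonneg (x - s)]
      refine ⟨π ∘ g₁, ⟨_, hπK.comp hg₁lip hmaps⟩,
        fun x hx => hπmem _ (hmaps x hx), fun x hx => ?_⟩
      rw [Function.comp_apply, hg₁S x hx]
      exact hπid x hx
  tfae_have 4 → 3 := by
    rintro ⟨f, hfc, hfS, H, hHc, hHS, hH0, hH1⟩
    rcases X.eq_empty_or_nonempty with hXe | hXne
    · have hSe : S = ∅ := by
        rw [hXe] at hSX
        exact eq_empty_of_subset_empty hSX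
      refine ⟨ε/2, ⟨by linarith, by linarith⟩, id, ?_, ?_, ?_⟩
      · rw [hXe, Set.empty_add]; exact continuousOn_empty _
      · rw [hXe, Set.empty_add]; intro x hx; exact absurd hx (notMem_empty x)
      · intro x hx; rw [hSe] at hx; exact absurd hx (notMem_empty x)
    · obtain ⟨x₀, hx₀⟩ := hXne
      have hSne : S.Nonempty := ⟨f x₀, hfS x₀ hx₀⟩
      obtain ⟨fb, hfbc, hfbeq⟩ := tietzeEuc hX.isClosed hfc
      have hK₀ : IsCompact (X + Metric.closedBall (0 : Euc n) ε) :=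
        hX.add (isCompact_closedBall 0 ε)
      obtain ⟨δ₁, hδ₁, hmod⟩ := Metric.uniformContinuousOn_iff_le.1
        (hK₀.uniformContinuousOn_of_continuous hfbc.continuousOn) ε hε0
      set δ : ℝ := min δ₁ (ε/2) with hδdef
      have hδpos : 0 < δ := lt_min hδ₁ (by linarith)
      have hδε : δ < ε := (min_le_right _ _).trans_lt (by linarith)
      set Y : Set (Euc n) := X + Metric.closedBall (0 : Euc n) δ with hYdef
      have hXY : X ⊆ Y := fun x hx => hself X δ hδpos.le x hx
      have hYK₀ : Y ⊆ X + Metric.closedBall (0 : Euc n) ε := by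
        intro z hz
        obtain ⟨x, hx, v, hv, rfl⟩ := Set.mem_add.1 hz
        exact Set.mem_add.2
          ⟨x, hx, v, Metric.closedBall_subset_closedBall hδε.le hv, rfl⟩
      have hYcompact : IsCompact Y := hX.add (isCompact_closedBall 0 δ)
      have hmaps : ∀ z ∈ Y, fb z ∈ S + Metric.closedBall (0 : Euc n) ε := by
        intro z hz
        obtain ⟨x, hx, v, hv, rfl⟩ := Set.mem_add.1 hz
        have hd : dist (x + v) x ≤ δ₁ := by
          have hh : dist (x + v) x = ‖v‖ := by rw [dist_eq_norm]; congr 1; abel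
          rw [hh]
          have hv' := Metric.mem_closedBall.1 hv
          rw [dist_zero_right] at hv'
          exact hv'.trans (min_le_left _ _)
        have h1 : dist (fb (x + v)) (fb x) ≤ ε :=
          hmod _ (hYK₀ hz) x (hself X ε hε0.le x hx) hd
        rw [hfbeq hx] at h1
        exact hthick S ε hε0.le _ (f x) (hfS x hx) h1
      set G : Euc n → Euc n := fun z => π (fb z) with hGdef
      have hGc : ContinuousOn G Y := hπcont.comp hfbc.continuousOn hmaps
      have hGS : ∀ z ∈ Y, G z ∈ S := fun z hz => hπmem _ (hmaps z hz)
      have hGX : ∀ x ∈ X, G x = f x := by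
        intro x hx
        rw [hGdef]
        simp only [hfbeq hx]
        exact hπid _ (hfS x hx)
      have hSint : S ⊆ interior Y := by
        intro s hs
        rw [mem_interior]
        refine ⟨Metric.ball s δ, ?_, Metric.isOpen_ball, Metric.mem_ball_self hδpos⟩
        intro y hy
        refine Set.mem_add.2 ⟨s, hSX hs, y - s, ?_, by abel⟩
        rw [Metric.mem_closedBall, dist_zero_right, ← dist_eq_norm]
        exact (Metric.mem_ball.1 hy).le
      classical
      set c₀ : ↥S := ⟨hSne.choose, hSne.choose_spec⟩ with hc₀def
      set h : Euc n × ℝ → ↥S := fun p =>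
        if hp : p.1 ∈ S ∧ p.2 ∈ Set.Icc (0:ℝ) 1 then ⟨H p.1 p.2, hHS _ hp.1 _ hp.2⟩
        else if hy : p.1 ∈ Y then ⟨G p.1, hGS _ hy⟩ else c₀ with hhdef
      have hvalB : ∀ p ∈ S ×ˢ Set.Icc (0:ℝ) 1, (h p : Euc n) = H p.1 p.2 := by
        intro p hp
        obtain ⟨hp1, hp2⟩ := hp
        simp only [hhdef, dif_pos (show p.1 ∈ S ∧ p.2 ∈ Set.Icc (0:ℝ) 1 from ⟨hp1, hp2⟩)]
      have hvalA : ∀ p ∈ Y ×ˢ ({(0:ℝ)} : Set ℝ), (h p : Euc n) = G p.1 := by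
        intro p hp
        obtain ⟨hp1, hp2⟩ := hp
        have hp2' : p.2 = (0:ℝ) := hp2
        by_cases hps : p.1 ∈ S ∧ p.2 ∈ Set.Icc (0:ℝ) 1
        · have e1 : (h p : Euc n) = H p.1 p.2 := by simp only [hhdef, dif_pos hps]
          rw [e1, hp2']
          rw [hH0 _ hps.1]
          exact (hGX _ (hSX hps.1)).symm
        · simp only [hhdef, dif_neg hps, dif_pos hp1]
      have hAclosed : IsClosed (Y ×ˢ ({(0:ℝ)} : Set ℝ)) :=
        hYcompact.isClosed.prod isClosed_singleton
      have hBclosed : IsClosed (S ×ˢ Set.Icc (0:ℝ) 1) := hS.isClosed.prod isClosed_Icc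
      have hhc : ContinuousOn h (Y ×ˢ ({(0:ℝ)} : Set ℝ) ∪ S ×ˢ Set.Icc (0:ℝ) 1) := by
        rw [Topology.IsInducing.subtypeVal.continuousOn_iff]
        refine myPaste hAclosed hBclosed ?_ ?_
        · exact ContinuousOn.congr
            (hGc.comp continuous_fst.continuousOn (fun p hp => hp.1))
            (fun p hp => hvalA p hp)
        · exact ContinuousOn.congr hHc (fun p hp => hvalB p hp)
      obtain ⟨HH, hHHc, hHHeq⟩ := hHEP Y hSint (ULift ↥S)
        (fun p => ULift.up (h p))
        ((Homeomorph.ulift.symm.continuous).comp_continuousOn hhc)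
      refine ⟨δ, ⟨hδpos, hδε⟩, fun z => ((HH (z, 1)).down : Euc n), ?_, ?_, ?_⟩
      · have h1 : ContinuousOn (fun z : Euc n => HH (z, 1)) Y := by
          refine hHHc.comp ?_ ?_
          · exact (continuous_id.prodMk continuous_const).continuousOn
          · intro z hz
            exact ⟨hz, by norm_num⟩
        exact (continuous_subtype_val.comp Homeomorph.ulift.continuous).comp_continuousOn h1
      · intro z hz
        exact ((HH (z, 1)).down).2
      · intro x hx
        have hmem : ((x, (1:ℝ)) : Euc n × ℝ)
            ∈ Y ×ˢ ({(0:ℝ)} : Set ℝ) ∪ S ×ˢ Set.Icc (0:ℝ) 1 :=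
          Or.inr ⟨hx, by norm_num⟩
        have e0 := hHHeq _ hmem
        have e2 : (h ((x : Euc n), (1:ℝ)) : Euc n) = H x 1 :=
          hvalB (x, 1) ⟨hx, by norm_num⟩
        calc ((HH (x, 1)).down : Euc n) = ((h (x, 1) : ↥S) : Euc n) := by rw [e0]
          _ = H x 1 := e2
          _ = x := hH1 x hx
  tfae_finish

end
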